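/- arXiv:2003.01172 — 2 statements merged into one kernel-verified Lean document; each statement's English description precedes it below -/
import Mathlib

section
/- Let (X, d₀) be a nonempty compact metric space, let λ ≥ 1, and let d_j (j ∈ ℕ) be metrics on X satisfying (1/λ)·d₀(p,q) ≤ d_j(p,q) ≤ λ·d₀(p,q) for all p,q ∈ X and all j. Then there exist a subsequence d_{j_k} and a metric d_∞ on X satisfying (1/λ)·d₀ ≤ d_∞ ≤ λ·d₀ such that d_{j_k} converges uniformly to d_∞, i.e., sup{ |d_{j_k}(p,q) − d_∞(p,q)| : p,q ∈ X } → 0 as k → ∞. -/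
open Filter

/-- Compactness of uniformly biLipschitz-bounded metrics: if metrics `d_j` on a nonempty
compact metric space `(X, d₀)` satisfy `(1/λ) d₀ ≤ d_j ≤ λ d₀`, then a subsequence converges
uniformly to a metric `d_∞` satisfying the same bounds. -/
theorem exists_subseq_tendstoUniformly_limit_metric
    {X : Type*} [MetricSpace X] [CompactSpace X] [Nonempty X]
    (lam : ℝ) (hlam : 1 ≤ lam) (dj : ℕ → X → X → ℝ)
    -- each d_j is a metric on X
    (hself : ∀ j a, dj j a a = 0)
    (heq : ∀ j a b, dj j a b = 0 → a = b)
    (hsymm : ∀ j a b, dj j a b = dj j b a)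
    (htri : ∀ j a b c, dj j a c ≤ dj j a b + dj j b c)
    -- two-sided bounds by d₀
    (hbound : ∀ j (p q : X), (1 / lam) * dist p q ≤ dj j p q ∧ dj j p q ≤ lam * dist p q) :
    ∃ φ : ℕ → ℕ, StrictMono φ ∧ ∃ dinf : X → X → ℝ,
      (∀ a, dinf a a = 0) ∧
      (∀ a b, dinf a b = 0 → a = b) ∧
      (∀ a b, dinf a b = dinf b a) ∧
      (∀ a b c, dinf a c ≤ dinf a b + dinf b c) ∧
      (∀ p q : X, (1 / lam) * dist p q ≤ dinf p q ∧ dinf p q ≤ lam * dist p q) ∧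
      TendstoUniformly (fun k (x : X × X) => dj (φ k) x.1 x.2)
        (fun x => dinf x.1 x.2) atTop := by
  have hlam0 : 0 < lam := lt_of_lt_of_le one_pos hlam
  -- each dj j is nonneg
  have hnonneg : ∀ j a b, 0 ≤ dj j a b := fun j a b =>
    le_trans (mul_nonneg (by positivity) dist_nonneg) (hbound j a b).1
  -- key Lipschitz estimate on the product
  have hlip : ∀ j (x y : X × X),
      dist (dj j x.1 x.2) (dj j y.1 y.2) ≤ 2 * lam * dist x y := by
    intro j x y
    rw [Real.dist_eq]
    have h1 : dj j x.1 x.2 - dj j y.1 y.2 ≤ dj j x.1 y.1 + dj j x.2 y.2 := by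
      have := htri j x.1 y.1 y.2
      have := htri j y.1 y.2 x.2
      have hs := hsymm j y.2 x.2
      linarith [htri j x.1 y.1 x.2, htri j y.1 y.2 x.2, hsymm j y.2 x.2]
    have h2 : dj j y.1 y.2 - dj j x.1 x.2 ≤ dj j x.1 y.1 + dj j x.2 y.2 := by
      linarith [htri j y.1 x.1 y.2, htri j x.1 x.2 y.2, hsymm j y.1 x.1, hsymm j x.2 y.2]
    have hb1 := (hbound j x.1 y.1).2
    have hb2 := (hbound j x.2 y.2).2
    have hd1 : dist x.1 y.1 ≤ dist x y := le_max_left _ _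
    have hd2 : dist x.2 y.2 ≤ dist x y := le_max_right _ _
    have : |dj j x.1 x.2 - dj j y.1 y.2| ≤ dj j x.1 y.1 + dj j x.2 y.2 :=
      abs_sub_le_iff.2 ⟨h1, h2⟩
    have hle : dj j x.1 y.1 + dj j x.2 y.2 ≤ 2 * lam * dist x y := by
      nlinarith [dist_nonneg (x := x) (y := y)]
    linarith
  have hcont : ∀ j, Continuous (fun x : X × X => dj j x.1 x.2) := by
    intro j
    exact (LipschitzWith.of_dist_le_mul (K := ⟨2 * lam, by positivity⟩)
      (fun x y => hlip j x y)).continuous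
  -- bundle as bounded continuous functions
  let F : ℕ → BoundedContinuousFunction (X × X) ℝ := fun j =>
    BoundedContinuousFunction.mkOfCompact ⟨fun x => dj j x.1 x.2, hcont j⟩
  -- Arzelà–Ascoli
  set C : ℝ := lam * Metric.diam (Set.univ : Set X) with hC
  have hCnn : 0 ≤ C := mul_nonneg hlam0.le Metric.diam_nonneg
  have hmem : ∀ j (x : X × X), F j x ∈ Set.Icc (0:ℝ) C := by
    intro j x
    refine ⟨hnonneg j x.1 x.2, le_trans (hbound j x.1 x.2).2 ?_⟩
    exact mul_le_mul_of_nonneg_left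
      (Metric.dist_le_diam_of_mem isCompact_univ.isBounded trivial trivial) hlam0.le
  have hequi : Equicontinuous ((↑) : Set.range F → (X × X) → ℝ) := by
    refine Metric.equicontinuous_of_continuity_modulus (fun t => 2 * lam * t) ?_ _ ?_
    · have : Filter.Tendsto (fun t : ℝ => 2 * lam * t) (nhds 0) (nhds (2 * lam * 0)) :=
        tendsto_const_nhds.mul tendsto_id
      simpa using this
    · rintro x y ⟨f, j, rfl⟩
      exact hlip j x y
  have hcompact : IsCompact (closure (Set.range F)) := by
    refine BoundedContinuousFunction.arzela_ascoli (Set.Icc (0:ℝ) C) isCompact_Icc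
      (Set.range F) ?_ hequi
    rintro f x ⟨j, rfl⟩
    exact hmem j x
  obtain ⟨finf, hfinf, φ, hφ, htend⟩ :=
    hcompact.tendsto_subseq (x := fun j => F j)
      (fun j => subset_closure (Set.mem_range_self j))
  refine ⟨φ, hφ, fun a b => finf (a, b), ?_⟩
  have hTU : TendstoUniformly (fun k (x : X × X) => dj (φ k) x.1 x.2)
      (fun x => finf (x.1, x.2)) atTop :=
    BoundedContinuousFunction.tendsto_iff_tendstoUniformly.1 htend
  have hpt : ∀ x : X × X, Filter.Tendsto (fun k => dj (φ k) x.1 x.2) atTop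
      (nhds (finf (x.1, x.2))) := fun x => hTU.tendsto_at x
  have hbnd : ∀ p q : X, (1 / lam) * dist p q ≤ finf (p, q) ∧ finf (p, q) ≤ lam * dist p q := by
    intro p q
    constructor
    · exact ge_of_tendsto (hpt (p, q)) (Filter.Eventually.of_forall fun k =>
        (hbound (φ k) p q).1)
    · exact le_of_tendsto (hpt (p, q)) (Filter.Eventually.of_forall fun k =>
        (hbound (φ k) p q).2)
  refine ⟨?_, ?_, ?_, ?_, hbnd, hTU⟩
  · intro a
    exact tendsto_nhds_unique (hpt (a, a)) (by simpa [hself] using tendsto_const_nhds)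
  · intro a b h
    have h' : finf (a, b) = 0 := h
    have := (hbnd a b).1
    rw [h'] at this
    have : dist a b ≤ 0 := by
      by_contra hd
      push_neg at hd
      have := mul_pos (show (0:ℝ) < 1 / lam by positivity) hd
      linarith
    exact dist_le_zero.1 this
  · intro a b
    exact tendsto_nhds_unique (hpt (a, b)) (by simpa [fun j => hsymm j a b] using hpt (b, a))
  · intro a b c
    refine le_of_tendsto_of_tendsto' (hpt (a, c)) ((hpt (a, b)).add (hpt (b, c))) ?_
    exact fun k => htri (φ k) a b c
end

section
/- Let (M, d₀) be a nonempty compact metric space in which every pair of points p₁, p₂ admits a midpoint (a point x with d₀(p₁,x) + d₀(x,p₂) = d₀(p₁,p₂)), and let μ be a finite Borel measure on M with μ(M) > 0 and μ(B(x,r)) > 0 for every open ball B(x,r). Let d_j (j ∈ ℕ) be metrics on M, Borel measurable as functions on M × M, with d_j(p,q) ≥ d₀(p,q) for all p,q and d_j → d₀ pointwise (μ × μ)-almost everywhere on M × M. Let μ_j be finite Borel measures on M with μ ≤ μ_j and μ_j(M) → μ(M). Then for every η > 0 there exists j₀ such that for all j ≥ j₀ there is a Borel set W_j ⊆ M with μ_j(M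 \ W_j) ≤ η and d₀(p,q) ≤ d_j(p,q) ≤ d₀(p,q) + η for all p,q ∈ W_j. -/
/-!
By Egorov, `d_j → d₀` uniformly off a bad set `T ⊆ M × M` of small `(μ × μ)`-measure. By
Chebyshev, most points `p` have a light slice `T_p`. On a compact space every ball of a fixed
radius has measure bounded below, so for two light points `p, q` every such ball contains a
point `y` good for both; taking the ball around a midpoint of `p, q` and going through `y`
gives `d_j(p, q) ≤ d₀(p, q) + η`. Finally `μ ≤ μ_j` and `μ_j(M) → μ(M)` transfer the bound on
the complement of the good set from `μ` to `μ_j`.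
-/

open MeasureTheory Filter Metric

open scoped ENNReal NNReal Topology

lemma exists_pos_le_measure_ball {M : Type*} [PseudoMetricSpace M] [CompactSpace M]
    [MeasurableSpace M] (μ : Measure M) (hballs : ∀ (x : M) (r : ℝ), 0 < r → 0 < μ (ball x r))
    {r : ℝ} (hr : 0 < r) : ∃ m : ℝ≥0, 0 < m ∧ ∀ x, (m : ℝ≥0∞) ≤ μ (ball x r) := by
  obtain ⟨t, ht⟩ := isCompact_univ.elim_finite_subcover (fun c : M => ball c (r / 2))
    (fun _ => isOpen_ball) (fun x _ => Set.mem_iUnion.2 ⟨x, mem_ball_self (half_pos hr)⟩)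
  -- capped at `1` so that `m` stays finite when the cover `t` is empty
  set m : ℝ≥0∞ := min (t.inf fun c => μ (ball c (r / 2))) 1
  have hm_pos : 0 < m :=
    lt_min (Finset.lt_inf_iff ENNReal.zero_lt_top |>.2 fun c _ => hballs c _ (half_pos hr))
      one_pos
  refine ⟨m.toNNReal, ENNReal.toNNReal_pos hm_pos.ne' (ne_top_of_le_ne_top ENNReal.one_ne_top
    (min_le_right _ _)), fun x => ?_⟩
  obtain ⟨c, hc, hxc⟩ := Set.mem_iUnion₂.1 (ht (Set.mem_univ x))
  calc (m.toNNReal : ℝ≥0∞) ≤ m := ENNReal.coe_toNNReal_le_self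
    _ ≤ μ (ball c (r / 2)) := (min_le_left _ _).trans (Finset.inf_le hc)
    _ ≤ μ (ball x r) := measure_mono (ball_subset_ball' (by
        rw [mem_ball'] at hxc; linarith))

lemma measure_setOf_le_measure_prodMk_preimage_le {α β : Type*} [MeasurableSpace α]
    [MeasurableSpace β] (μ : Measure α) (ν : Measure β) [SFinite ν] {T : Set (α × β)}
    (hT : MeasurableSet T) {κ c : ℝ≥0∞} (hκ₀ : κ ≠ 0) (hκ : κ ≠ ∞)
    (hTc : μ.prod ν T ≤ κ * c) : μ {p | κ ≤ ν (Prod.mk p ⁻¹' T)} ≤ c := by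
  refine (ENNReal.mul_le_mul_iff_right hκ₀ hκ).1 (le_trans ?_ hTc)
  rw [Measure.prod_apply hT]
  exact mul_meas_ge_le_lintegral₀ (measurable_measure_prodMk_left hT).aemeasurable κ

lemma nonempty_sdiff_union_of_add_lt {α : Type*} [MeasurableSpace α] {μ : Measure α}
    {s t u : Set α} (h : μ t + μ u < μ s) : (s \ (t ∪ u)).Nonempty :=
  nonempty_of_measure_ne_zero <| ne_bot_of_gt <| calc
    0 < μ s - (μ t + μ u) := tsub_pos_of_lt h
    _ ≤ μ s - μ (t ∪ u) := tsub_le_tsub_left (measure_union_le t u) _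
    _ ≤ μ (s \ (t ∪ u)) := le_measure_sdiff

lemma measure_compl_le_of_le_of_measure_univ_le {α : Type*} [MeasurableSpace α]
    {μ ν : Measure α} [IsFiniteMeasure ν] (hle : μ ≤ ν) {s : Set α} (hs : MeasurableSet s)
    {c : ℝ≥0∞} (hν : ν Set.univ ≤ μ Set.univ + c) : ν sᶜ ≤ μ sᶜ + c := by
  refine (ENNReal.add_le_add_iff_left (measure_ne_top ν s)).1 ?_
  calc ν s + ν sᶜ = ν Set.univ := measure_add_measure_compl hs
    _ ≤ μ s + μ sᶜ + c := by rwa [measure_add_measure_compl hs]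
    _ ≤ ν s + (μ sᶜ + c) := by rw [add_assoc]; gcongr

lemma le_dist_add_of_forall_exists_near_midpoint {M : Type*} [PseudoMetricSpace M]
    {d : M → M → ℝ} (htri : ∀ a b c, d a c ≤ d a b + d b c) (hsymm : ∀ a b, d a b = d b a)
    {p q : M} (hmid : ∃ x, dist p x + dist x q = dist p q) {ε : ℝ}
    (hnear : ∀ x, ∃ y ∈ ball x ε, dist (dist p y) (d p y) < ε ∧ dist (dist q y) (d q y) < ε) :
    d p q ≤ dist p q + 4 * ε := by
  obtain ⟨x, hx⟩ := hmid
  obtain ⟨y, hy, hpy, hqy⟩ := hnear x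
  rw [mem_ball, dist_comm] at hy
  rw [Real.dist_eq, abs_lt] at hpy hqy
  calc d p q ≤ d p y + d q y := (htri p y q).trans_eq (by rw [hsymm y q])
    _ ≤ dist p y + dist q y + 2 * ε := by linarith
    _ ≤ dist p x + dist x q + 2 * dist x y + 2 * ε := by
        linarith [dist_triangle p x y, dist_triangle q x y, dist_comm q x]
    _ ≤ dist p q + 4 * ε := by linarith

lemma exists_measurableSet_measure_compl_le_forall_exists_near
    {M β : Type*} [PseudoMetricSpace M] [CompactSpace M] [MeasurableSpace M]
    [PseudoMetricSpace β] (μ : Measure M) [IsFiniteMeasure μ]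
    (hballs : ∀ (x : M) (r : ℝ), 0 < r → 0 < μ (ball x r))
    {F : ℕ → M × M → β} {g : M × M → β} (hF : ∀ j, StronglyMeasurable (F j))
    (hg : StronglyMeasurable g) (hFg : ∀ᵐ z ∂μ.prod μ, Tendsto (F · z) atTop (𝓝 (g z)))
    {ε δ : ℝ} (hε : 0 < ε) (hδ : 0 < δ) :
    ∃ W : Set M, MeasurableSet W ∧ μ Wᶜ ≤ ENNReal.ofReal δ ∧
      ∀ᶠ j in atTop, ∀ p ∈ W, ∀ q ∈ W, ∀ x, ∃ y ∈ ball x ε,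
        dist (g (p, y)) (F j (p, y)) < ε ∧ dist (g (q, y)) (F j (q, y)) < ε := by
  obtain ⟨m, hm, hball⟩ := exists_pos_le_measure_ball μ hballs hε
  set κ : ℝ≥0 := m / 2
  have hκ : 0 < κ := half_pos hm
  obtain ⟨T, hT, hTμ, hunif⟩ := tendstoUniformlyOn_of_ae_tendsto' hF hg hFg
    (mul_pos (NNReal.coe_pos.2 hκ) hδ)
  refine ⟨{p | μ (Prod.mk p ⁻¹' T) < κ},
    measurableSet_lt (measurable_measure_prodMk_left hT) measurable_const, ?_, ?_⟩
  · simp only [Set.compl_ofPred, not_lt]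
    refine measure_setOf_le_measure_prodMk_preimage_le μ μ hT (by simpa using hκ.ne')
      ENNReal.coe_ne_top ?_
    rwa [ENNReal.ofReal_mul (NNReal.coe_nonneg _), ENNReal.ofReal_coe_nnreal] at hTμ
  · filter_upwards [Metric.tendstoUniformlyOn_iff.1 hunif ε hε] with j hj p hp q hq x
    have hlt : μ (Prod.mk p ⁻¹' T) + μ (Prod.mk q ⁻¹' T) < μ (ball x ε) := calc
      _ < (κ : ℝ≥0∞) + κ := ENNReal.add_lt_add hp hq
      _ = m := by rw [← ENNReal.coe_add, add_halves]
      _ ≤ μ (ball x ε) := hball x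
    obtain ⟨y, hy, hyT⟩ := nonempty_sdiff_union_of_add_lt hlt
    simp only [Set.mem_union, Set.mem_preimage, not_or] at hyT
    exact ⟨y, hy, hj _ hyT.1, hj _ hyT.2⟩

theorem exists_good_sets_of_ae_tendsto_and_measure_tendsto_general
    {M : Type*} [MetricSpace M] [CompactSpace M]
    [MeasurableSpace M] [BorelSpace M]
    (hmid : ∀ p₁ p₂ : M, ∃ x : M, dist p₁ x + dist x p₂ = dist p₁ p₂)
    (μ : Measure M) [IsFiniteMeasure μ]
    (hballs : ∀ (x : M) (r : ℝ), 0 < r → 0 < μ (ball x r))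
    (dj : ℕ → M → M → ℝ)
    -- each d_j is a metric on M, Borel measurable as a function on M × M
    (hsymm : ∀ j a b, dj j a b = dj j b a)
    (htri : ∀ j a b c, dj j a c ≤ dj j a b + dj j b c)
    (hmeas : ∀ j, Measurable (fun x : M × M => dj j x.1 x.2))
    -- d_j ≥ d₀ and d_j → d₀ pointwise (μ × μ)-a.e.
    (hge : ∀ j (p q : M), dist p q ≤ dj j p q)
    (hconv : ∀ᵐ x ∂(μ.prod μ),
      Tendsto (fun j => dj j x.1 x.2) atTop (nhds (dist x.1 x.2)))
    (μj : ℕ → Measure M) [∀ j, IsFiniteMeasure (μj j)]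
    (hμle : ∀ j, μ ≤ μj j)
    (hμtot : Tendsto (fun j => μj j Set.univ) atTop (nhds (μ Set.univ))) :
    ∀ η : ℝ, 0 < η → ∃ j₀ : ℕ, ∀ j ≥ j₀, ∃ W : Set M, MeasurableSet W ∧
      μj j Wᶜ ≤ ENNReal.ofReal η ∧
      ∀ p ∈ W, ∀ q ∈ W, dist p q ≤ dj j p q ∧ dj j p q ≤ dist p q + η := by
  intro η hη
  obtain ⟨W, hWm, hμW, hnear⟩ := exists_measurableSet_measure_compl_le_forall_exists_near μ
    hballs (fun j => (hmeas j).stronglyMeasurable) continuous_dist.stronglyMeasurable hconv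
    (div_pos hη four_pos) (half_pos hη)
  have hμj : ∀ᶠ j in atTop, μj j Set.univ ≤ μ Set.univ + ENNReal.ofReal (η / 2) :=
    (hμtot.eventually_lt_const (ENNReal.lt_add_right (measure_ne_top μ _)
      (by simpa using half_pos hη))).mono fun _ => le_of_lt
  obtain ⟨j₀, hj₀⟩ := eventually_atTop.1 (hnear.and hμj)
  refine ⟨j₀, fun j hj => ⟨W, hWm, ?_, fun p hp q hq => ⟨hge j p q, ?_⟩⟩⟩
  · calc μj j Wᶜ ≤ μ Wᶜ + ENNReal.ofReal (η / 2) :=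
          measure_compl_le_of_le_of_measure_univ_le (hμle j) hWm (hj₀ j hj).2
      _ ≤ ENNReal.ofReal (η / 2) + ENNReal.ofReal (η / 2) := by gcongr
      _ = ENNReal.ofReal η := by rw [← ENNReal.ofReal_add (half_pos hη).le (half_pos hη).le,
          add_halves]
  · have := le_dist_add_of_forall_exists_near_midpoint (htri j) (hsymm j) (hmid p q)
      ((hj₀ j hj).1 p hp q hq)
    linarith

/-- Metric–measure core of Theorem 4.1: given a nonempty compact metric space `(M, d₀)`
with midpoints, a finite Borel measure `μ` positive on balls, metrics `d_j ≥ d₀` converging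
to `d₀` pointwise `(μ × μ)`-a.e., and finite Borel measures `μ_j ≥ μ` with `μ_j(M) → μ(M)`,
then for every `η > 0` there eventually exist good sets `W_j` with `μ_j(M \ W_j) ≤ η` on
which `d₀ ≤ d_j ≤ d₀ + η`. -/
theorem exists_good_sets_of_ae_tendsto_and_measure_tendsto
    {M : Type*} [MetricSpace M] [CompactSpace M] [Nonempty M]
    [MeasurableSpace M] [BorelSpace M]
    (hmid : ∀ p₁ p₂ : M, ∃ x : M, dist p₁ x + dist x p₂ = dist p₁ p₂)
    (μ : Measure M) [IsFiniteMeasure μ]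
    (hμpos : 0 < μ Set.univ)
    (hballs : ∀ (x : M) (r : ℝ), 0 < r → 0 < μ (ball x r))
    (dj : ℕ → M → M → ℝ)
    -- each d_j is a metric on M, Borel measurable as a function on M × M
    (hself : ∀ j a, dj j a a = 0)
    (heq : ∀ j a b, dj j a b = 0 → a = b)
    (hsymm : ∀ j a b, dj j a b = dj j b a)
    (htri : ∀ j a b c, dj j a c ≤ dj j a b + dj j b c)
    (hmeas : ∀ j, Measurable (fun x : M × M => dj j x.1 x.2))
    -- d_j ≥ d₀ and d_j → d₀ pointwise (μ × μ)-a.e.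
    (hge : ∀ j (p q : M), dist p q ≤ dj j p q)
    (hconv : ∀ᵐ x ∂(μ.prod μ),
      Tendsto (fun j => dj j x.1 x.2) atTop (nhds (dist x.1 x.2)))
    (μj : ℕ → Measure M) [∀ j, IsFiniteMeasure (μj j)]
    (hμle : ∀ j, μ ≤ μj j)
    (hμtot : Tendsto (fun j => μj j Set.univ) atTop (nhds (μ Set.univ))) :
    ∀ η : ℝ, 0 < η → ∃ j₀ : ℕ, ∀ j ≥ j₀, ∃ W : Set M, MeasurableSet W ∧
      μj j Wᶜ ≤ ENNReal.ofReal η ∧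
      ∀ p ∈ W, ∀ q ∈ W, dist p q ≤ dj j p q ∧ dj j p q ≤ dist p q + η :=
  exists_good_sets_of_ae_tendsto_and_measure_tendsto_general hmid μ hballs dj hsymm htri hmeas hge
    hconv μj hμle hμtot
end
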